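/- arXiv:0710.5381 — 4 statements merged into one kernel-verified Lean document; each statement's English description precedes it below -/
import Mathlib

section
/- Let A be the q-quaternion algebra with generating matrix x = [[α, −qγ*],[γ, α*]] and let R̂^{αβ}_{γδ} = q δ^α_γ δ^β_δ + ε^{αβ}ε_{γδ}. Then the commutation relations of the algebra are equivalent to the RTT-type relation R̂ x₁x₂ = x₁x₂ R̂, i.e. Σ R̂^{αβ}_{γδ} x^{γμ} x^{δν} = Σ x^{αγ} x^{βδ} R̂^{γδ}_{μν} for all indices. -/
open Matrix

/-- The q-deformed ε-tensor ε = [[0,1],[-q,0]]. -/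
noncomputable def eps {K : Type*} [Field K] (q : K) : Matrix (Fin 2) (Fin 2) K :=
  !![0, 1; -q, 0]

/-- The inverse ε-tensor, with entries ε^{αβ}. -/
noncomputable def epsInv {K : Type*} [Field K] (q : K) : Matrix (Fin 2) (Fin 2) K :=
  !![0, -q⁻¹; 1, 0]

/-- The braid matrix R̂^{αβ}_{γδ} = q δ^α_γ δ^β_δ + ε^{αβ} ε_{γδ}. -/
noncomputable def Rhat {K : Type*} [Field K] (q : K) :
    Matrix (Fin 2 × Fin 2) (Fin 2 × Fin 2) K :=
  Matrix.of fun p r =>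
    q * (if p.1 = r.1 then 1 else 0) * (if p.2 = r.2 then 1 else 0)
      + epsInv q p.1 p.2 * eps q r.1 r.2

/-!
Write `R̂ = q • 1 + P` with `P_{(αβ),(γδ)} = ε^{αβ} ε_{γδ}` of rank one. The scalar part commutes
with `x₁x₂ = x ⊗ₖ x`, so the RTT relation says `P` does, i.e.
`ε^{αβ} (ε x₁x₂)_{μν} = (x₁x₂ ε⁻¹)^{αβ} ε_{μν}`. Both ε's vanish on the diagonal, so this forces the
diagonal contractions of `x₁x₂` with ε and ε⁻¹ to vanish, which gives the four q-commutation
relations, and makes the off-diagonal ones multiples of the quantum determinant `αα* + q²γγ*`,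
which gives `[α, α*] = (1 - q²)γγ*` and `[γ*, γ] = 0`.
-/

open scoped Kronecker

section

variable {K A ι : Type*} [CommSemiring K] [Ring A] [Algebra K A] [Fintype ι]

theorem commute_kronecker_self_iff (R : Matrix (ι × ι) (ι × ι) A) (x : Matrix ι ι A) :
    Commute R (x ⊗ₖ x) ↔ ∀ α β μ ν, ∑ γ, ∑ δ, R (α, β) (γ, δ) * x γ μ * x δ ν
        = ∑ γ, ∑ δ, x α γ * x β δ * R (γ, δ) (μ, ν) := by
  simp only [Commute, SemiconjBy, ← Matrix.ext_iff, Prod.forall, mul_apply,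
    Fintype.sum_prod_type, kronecker_apply, mul_assoc]

theorem commute_algebraMap_add_iff [DecidableEq ι] (c : K) (P M : Matrix ι ι A) :
    Commute (algebraMap K (Matrix ι ι A) c + P) M ↔ Commute P M :=
  ⟨fun h => by simpa using h.sub_left (Algebra.commute_algebraMap_left c M),
    (Algebra.commute_algebraMap_left c M).add_left⟩

theorem commute_map_vecMulVec_iff (u v : ι → K) (M : Matrix ι ι A) :
    Commute ((vecMulVec u v).map (algebraMap K A)) M ↔
      ∀ i j, u i • ∑ k, v k • M k j = v j • ∑ k, u k • M i k := by
  simp only [Finset.smul_sum, smul_smul]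
  simp only [Commute, SemiconjBy, ← Matrix.ext_iff, mul_apply, Matrix.map_apply, vecMulVec_apply,
    Algebra.smul_def, Algebra.commutes _ (M _ _), mul_comm (v _) (u _)]

end

section

variable {K A : Type*} [Field K] [Ring A] [Algebra K A]

theorem Rhat_map_algebraMap (q : K) :
    (Rhat q).map (algebraMap K A) = algebraMap K _ q +
      (vecMulVec (fun p => epsInv q p.1 p.2) (fun p => eps q p.1 p.2)).map (algebraMap K A) := by
  ext ⟨i, j⟩ ⟨k, l⟩
  simp only [Rhat, Matrix.map_apply, Matrix.of_apply, Matrix.add_apply, algebraMap_matrix_apply,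
    vecMulVec_apply, Prod.ext_iff, map_add, map_mul]
  split_ifs <;> simp_all

theorem epsInv_smul_eq_eps_smul_iff {M : Type*} [AddCommGroup M] [Module K M] {q : K}
    (hq : q ≠ 0) (D E : Fin 2 × Fin 2 → M) :
    (∀ i j, epsInv q i.1 i.2 • D j = eps q j.1 j.2 • E i) ↔
      D (0, 0) = 0 ∧ D (1, 1) = 0 ∧ E (0, 0) = 0 ∧ E (1, 1) = 0 ∧
      E (1, 0) = D (0, 1) ∧ D (1, 0) = -q • D (0, 1) ∧ E (0, 1) = -q⁻¹ • D (0, 1) := by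
  constructor
  · intro h
    have hE₁₀ : E (1, 0) = D (0, 1) := by simpa [eps, epsInv] using (h (1, 0) (0, 1)).symm
    exact ⟨by simpa [eps, epsInv] using h (1, 0) (0, 0),
      by simpa [eps, epsInv] using h (1, 0) (1, 1),
      by simpa [eps, epsInv, hq] using h (0, 0) (1, 0),
      by simpa [eps, epsInv, hq] using h (1, 1) (1, 0),
      hE₁₀,
      by simpa [eps, epsInv, hE₁₀] using h (1, 0) (1, 0),
      by simpa [eps, epsInv] using (h (0, 1) (0, 1)).symm⟩
  · rintro ⟨hD₀₀, hD₁₁, hE₀₀, hE₁₁, hE₁₀, hD₁₀, hE₀₁⟩ ⟨i₁, i₂⟩ ⟨j₁, j₂⟩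
    fin_cases i₁ <;> fin_cases i₂ <;> fin_cases j₁ <;> fin_cases j₂ <;>
      simp [eps, epsInv, hD₀₀, hD₁₁, hE₀₀, hE₁₁, hE₁₀, hD₁₀, hE₀₁, smul_smul, hq]

theorem sum_eps_smul_kronecker (q : K) (x : Matrix (Fin 2) (Fin 2) A) (j : Fin 2 × Fin 2) :
    ∑ k, eps q k.1 k.2 • (x ⊗ₖ x) k j = x 0 j.1 * x 1 j.2 - q • (x 1 j.1 * x 0 j.2) := by
  simp [Fintype.sum_prod_type, eps, sub_eq_add_neg]

theorem sum_epsInv_smul_kronecker (q : K) (x : Matrix (Fin 2) (Fin 2) A) (i : Fin 2 × Fin 2) :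
    ∑ k, epsInv q k.1 k.2 • (x ⊗ₖ x) i k = x i.1 1 * x i.2 0 - q⁻¹ • (x i.1 0 * x i.2 1) := by
  simp [Fintype.sum_prod_type, epsInv, sub_eq_add_neg, add_comm]

theorem qQuaternion_relations_iff {q : K} (hq : q ≠ 0) (a g as gs : A) :
    let x : Matrix (Fin 2) (Fin 2) A := !![a, -(algebraMap K A q) * gs; g, as]
    (a * g = algebraMap K A q * (g * a) ∧
     a * gs = algebraMap K A q * (gs * a) ∧
     g * as = algebraMap K A q * (as * g) ∧
     gs * as = algebraMap K A q * (as * gs) ∧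
     a * as - as * a = algebraMap K A (1 - q ^ 2) * (g * gs) ∧
     gs * g = g * gs) ↔
    ∀ i j : Fin 2 × Fin 2, epsInv q i.1 i.2 • ∑ k, eps q k.1 k.2 • (x ⊗ₖ x) k j
      = eps q j.1 j.2 • ∑ k, epsInv q k.1 k.2 • (x ⊗ₖ x) i k := by
  intro x
  rw [epsInv_smul_eq_eps_smul_iff hq]
  simp only [sum_eps_smul_kronecker, sum_epsInv_smul_kronecker]
  simp only [neg_mul, ← Algebra.smul_def, Fin.isValue, of_apply, cons_val', cons_val_zero,
    cons_val_fin_one, cons_val_one, Algebra.smul_mul_assoc, mul_neg, Algebra.mul_smul_comm,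
    smul_neg, smul_smul, sub_neg_eq_add, inv_mul_cancel₀ hq, one_smul, smul_add, neg_smul,
    inv_mul_cancel_left₀ hq, x]
  constructor
  · rintro ⟨h₁, h₂, h₃, h₄, h₅, h₆⟩
    refine ⟨?_, ?_, ?_, ?_, ?_, ?_, ?_⟩
    · linear_combination (norm := module) h₁
    · linear_combination (norm := module) (-q) • h₄
    · linear_combination (norm := module) h₂
    · linear_combination (norm := skip) (-q⁻¹) • h₃
      match_scalars <;> field_simp <;> ring
    · linear_combination (norm := module) -h₅
    · linear_combination (norm := module) q • h₅ - q • h₆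
    · linear_combination (norm := module) -q • h₆
  · rintro ⟨hD₀₀, hD₁₁, hE₀₀, hE₁₁, hE₁₀, hD₁₀, hE₀₁⟩
    refine ⟨?_, ?_, ?_, ?_, ?_, ?_⟩
    · linear_combination (norm := module) hD₀₀
    · linear_combination (norm := module) hE₀₀
    · linear_combination (norm := skip) (-q) • hE₁₁
      match_scalars <;> field_simp <;> ring
    · linear_combination (norm := skip) (-q⁻¹) • hD₁₁
      match_scalars <;> field_simp <;> ring
    · linear_combination (norm := module) -hE₁₀
    · linear_combination (norm := skip) -q⁻¹ • hE₀₁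
      match_scalars <;> field_simp <;> ring

end

/-- the defining commutation relations of the q-quaternion algebra
are equivalent to the RTT-type relation R̂ x₁x₂ = x₁x₂ R̂. -/
theorem relations_iff_RTT {A : Type*} [Ring A] [Algebra ℂ A] (q : ℝ) (hq : q ≠ 0)
    (a g as gs : A) :
    let x : Matrix (Fin 2) (Fin 2) A := !![a, -(algebraMap ℂ A q) * gs; g, as]
    let R : Matrix (Fin 2 × Fin 2) (Fin 2 × Fin 2) A :=
      (Rhat (q : ℂ)).map (algebraMap ℂ A)
    (a * g = algebraMap ℂ A q * (g * a) ∧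
     a * gs = algebraMap ℂ A q * (gs * a) ∧
     g * as = algebraMap ℂ A q * (as * g) ∧
     gs * as = algebraMap ℂ A q * (as * gs) ∧
     a * as - as * a = algebraMap ℂ A (1 - q ^ 2) * (g * gs) ∧
     gs * g = g * gs) ↔
    (∀ α β μ ν : Fin 2,
      ∑ γ : Fin 2, ∑ δ : Fin 2, R (α, β) (γ, δ) * x γ μ * x δ ν
        = ∑ γ : Fin 2, ∑ δ : Fin 2, x α γ * x β δ * R (γ, δ) (μ, ν)) := by
  intro x R
  rw [← commute_kronecker_self_iff, show R = _ from Rhat_map_algebraMap (q : ℂ),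
    commute_algebraMap_add_iff, commute_map_vecMulVec_iff]
  exact qQuaternion_relations_iff (Complex.ofReal_ne_zero.mpr hq) a g as gs
end

section
/- Let B be an algebra, and suppose a and x are 2×2 matrices over B whose entries mutually commute (every entry of a commutes with every entry of x), each satisfying R̂ a₁a₂ = a₁a₂ R̂ and R̂ x₁x₂ = x₁x₂ R̂. Then the matrix product ax also satisfies R̂ (ax)₁(ax)₂ = (ax)₁(ax)₂ R̂. -/
open Matrix

/-- The RTT relation R̂ m₁m₂ = m₁m₂ R̂ for a 2×2 matrix m over an algebra. -/
def RTTrel {B : Type*} [Ring B] (R : Matrix (Fin 2 × Fin 2) (Fin 2 × Fin 2) B)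
    (m : Matrix (Fin 2) (Fin 2) B) : Prop :=
  ∀ α β μ ν : Fin 2,
    ∑ γ : Fin 2, ∑ δ : Fin 2, R (α, β) (γ, δ) * m γ μ * m δ ν
      = ∑ γ : Fin 2, ∑ δ : Fin 2, m α γ * m β δ * R (γ, δ) (μ, ν)

open scoped Kronecker

theorem rttRel_iff_mul_kronecker_comm {B : Type*} [Ring B]
    (R : Matrix (Fin 2 × Fin 2) (Fin 2 × Fin 2) B) (m : Matrix (Fin 2) (Fin 2) B) :
    RTTrel R m ↔ R * m ⊗ₖ m = m ⊗ₖ m * R := by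
  simp only [RTTrel, ← Matrix.ext_iff, Prod.forall, Matrix.mul_apply, Fintype.sum_prod_type,
    kroneckerMap_apply, mul_assoc]

theorem mul_kronecker_mul_of_commute {l m n l' m' n' α : Type*} [Fintype m] [Fintype m']
    [Semiring α] (A : Matrix l m α) (B : Matrix m n α) (A' : Matrix l' m' α)
    (B' : Matrix m' n' α) (hBA' : ∀ j k i' j', Commute (B j k) (A' i' j')) :
    (A * B) ⊗ₖ (A' * B') = A ⊗ₖ A' * B ⊗ₖ B' := by
  ext ⟨i, i'⟩ ⟨k, k'⟩
  simp only [kroneckerMap_apply, Matrix.mul_apply, Fintype.sum_prod_type, Finset.sum_mul_sum]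
  refine Finset.sum_congr rfl fun j _ => Finset.sum_congr rfl fun j' _ => ?_
  exact (hBA' j k i' j').mul_mul_mul_comm _ _

theorem RTTrel.mul {B : Type*} [Ring B] {R : Matrix (Fin 2 × Fin 2) (Fin 2 × Fin 2) B}
    {a x : Matrix (Fin 2) (Fin 2) B} (ha : RTTrel R a) (hx : RTTrel R x)
    (hcomm : ∀ i j k l, Commute (a i j) (x k l)) : RTTrel R (a * x) := by
  rw [rttRel_iff_mul_kronecker_comm] at ha hx ⊢
  rw [mul_kronecker_mul_of_commute a x a x fun i j k l => (hcomm k l i j).symm,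
    ← Matrix.mul_assoc, ha, Matrix.mul_assoc, hx, Matrix.mul_assoc]

theorem RTT_product_general {K : Type*} [Field K] (q : K)
    {B : Type*} [Ring B] [Algebra K B]
    (a x : Matrix (Fin 2) (Fin 2) B)
    (hcomm : ∀ i j k l : Fin 2, Commute (a i j) (x k l))
    (ha : RTTrel ((Rhat q).map (algebraMap K B)) a)
    (hx : RTTrel ((Rhat q).map (algebraMap K B)) x) :
    RTTrel ((Rhat q).map (algebraMap K B)) (a * x) :=
  ha.mul hx hcomm

/-- if a and x are 2×2 matrices with mutually commuting entries,
each satisfying R̂ m₁m₂ = m₁m₂ R̂, then so does the matrix product ax. -/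
theorem RTT_product {K : Type*} [Field K] (q : K) (hq : q ≠ 0)
    {B : Type*} [Ring B] [Algebra K B]
    (a x : Matrix (Fin 2) (Fin 2) B)
    (hcomm : ∀ i j k l : Fin 2, Commute (a i j) (x k l))
    (ha : RTTrel ((Rhat q).map (algebraMap K B)) a)
    (hx : RTTrel ((Rhat q).map (algebraMap K B)) x) :
    RTTrel ((Rhat q).map (algebraMap K B)) (a * x) :=
  RTT_product_general q a x hcomm ha hx
end

section
/- In the localized q-quaternion algebra, the matrix T := x/|x| satisfies T† = T⁻¹ = T̄ and det_q(T) := T¹¹T²² − q T¹²T²¹ = 1, i.e. the entries of T satisfy the defining relations of SU_q(2). -/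
/-!
Write `Q = q·1`, which is central and self-adjoint. Conjugating by `ε` turns `x` into
`x̄ = [[α*, γ*], [−qγ, α]]`, which is also `x†`. The relations of `ℍ_q` give
`x x̄ = x̄ x = |x|² · 1` and `det_q x = |x|²`: the off-diagonal entries vanish by the
q-commutation relations, and in `αα* + q²γ*γ` the relation `αα* − α*α = (1 − q²)γγ*`
together with `γ*γ = γγ*` cancels the `q²`-terms. As `|x|⁻¹` is central and self-adjoint,
it passes through all of these identities, and `|x|⁻¹ |x|⁻¹ |x|² = 1`.
-/

open Matrix

namespace Matrix

variable {A m n p : Type*} [Ring A] {c : A}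

theorem mul_smul_of_forall_commute [Fintype n] (hc : ∀ y, Commute c y) (M : Matrix m n A)
    (N : Matrix n p A) : M * (c • N) = c • (M * N) := by
  ext i k
  simp only [mul_apply, smul_apply, smul_eq_mul, Finset.mul_sum, (hc _).symm.left_comm]

theorem conjTranspose_smul_of_forall_commute [StarRing A] (hc : ∀ y, Commute c y)
    (M : Matrix m n A) : (c • M)ᴴ = star c • Mᴴ := by
  ext i j
  simp only [conjTranspose_apply, smul_apply, smul_eq_mul, star_mul]
  exact ((hc _).star_star).symm.eq

end Matrix

def qDet {A : Type*} [Ring A] (Q : A) (M : Matrix (Fin 2) (Fin 2) A) : A :=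
  M 0 0 * M 1 1 - Q * (M 0 1 * M 1 0)

section Ring

variable {A : Type*} [Ring A] {Q Q' c : A}

theorem qDet_smul_of_forall_commute (hc : ∀ y, Commute c y) (M : Matrix (Fin 2) (Fin 2) A) :
    qDet Q (c • M) = c * c * qDet Q M := by
  simp only [qDet, Matrix.smul_apply, smul_eq_mul, mul_sub, mul_assoc,
    fun y z => (hc y).symm.left_comm z]

theorem eps_inv_mul_transpose_mul_eps (hQ : ∀ y, Commute Q y) (hQ'Q : Q' * Q = 1)
    (m₀₀ m₀₁ m₁₀ m₁₁ : A) :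
    !![0, -Q'; 1, 0] * (!![m₀₀, m₀₁; m₁₀, m₁₁])ᵀ * !![0, 1; -Q, 0]
      = !![m₁₁, -(Q' * m₀₁); -(Q * m₁₀), m₀₀] := by
  rw [(eta_fin_two _ : (!![m₀₀, m₀₁; m₁₀, m₁₁])ᵀ = !![m₀₀, m₁₀; m₀₁, m₁₁]), mul_fin_two,
    mul_fin_two]
  have hQQ' : Q * Q' = 1 := (hQ Q').eq.trans hQ'Q
  simp [← (hQ _).eq, ← mul_assoc, hQQ']

theorem neg_mul_mul_neg_mul (hQ : ∀ y, Commute Q y) (b d : A) :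
    -Q * b * (-Q * d) = Q * Q * (b * d) := by
  simp only [neg_mul, mul_neg, neg_neg, mul_assoc, (hQ b).symm.left_comm d]

end Ring

section QQuaternion

variable {A : Type*} [Ring A] [StarRing A] {Q a g : A}

theorem mul_star_add_mul_mul_star_mul_eq
    (h5 : a * star a - star a * a = (1 - Q * Q) * (g * star g)) (h6 : star g * g = g * star g) :
    a * star a + Q * Q * (star g * g) = star a * a + star g * g := by
  rw [sub_eq_iff_eq_add.mp h5, h6]
  noncomm_ring

theorem conjTranspose_qQuaternion (hQ : ∀ y, Commute Q y) (hQs : star Q = Q) :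
    (!![a, -Q * star g; g, star a])ᴴ = !![star a, star g; -Q * g, a] := by
  rw [eta_fin_two (!![a, -Q * star g; g, star a])ᴴ]
  simp [hQs, (hQ g).eq]

theorem qQuaternion_mul_bar (hQ : ∀ y, Commute Q y)
    (h2 : a * star g = Q * (star g * a)) (h3 : g * star a = Q * (star a * g))
    (h5 : a * star a - star a * a = (1 - Q * Q) * (g * star g)) (h6 : star g * g = g * star g) :
    !![a, -Q * star g; g, star a] * !![star a, star g; -Q * g, a]
      = (star a * a + star g * g) • (1 : Matrix (Fin 2) (Fin 2) A) := by
  have e₀₀ : a * star a + -Q * star g * (-Q * g) = star a * a + star g * g := by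
    rw [neg_mul_mul_neg_mul hQ, mul_star_add_mul_mul_star_mul_eq h5 h6]
  have e₀₁ : a * star g + -Q * star g * a = 0 := by
    rw [h2, neg_mul, neg_mul, mul_assoc, add_neg_cancel]
  have e₁₀ : g * star a + star a * (-Q * g) = 0 := by
    rw [h3, neg_mul, mul_neg, (hQ _).symm.left_comm, add_neg_cancel]
  have e₁₁ : g * star g + star a * a = star a * a + star g * g := by
    rw [h6, add_comm]
  rw [mul_fin_two, e₀₀, e₀₁, e₁₀, e₁₁, smul_one_eq_diagonal, diagonal_fin_two]

theorem bar_mul_qQuaternion (hQ : ∀ y, Commute Q y)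
    (h1 : a * g = Q * (g * a)) (h4 : star g * star a = Q * (star a * star g))
    (h5 : a * star a - star a * a = (1 - Q * Q) * (g * star g)) (h6 : star g * g = g * star g) :
    !![star a, star g; -Q * g, a] * !![a, -Q * star g; g, star a]
      = (star a * a + star g * g) • (1 : Matrix (Fin 2) (Fin 2) A) := by
  have e₀₁ : star a * (-Q * star g) + star g * star a = 0 := by
    rw [h4, neg_mul, mul_neg, (hQ _).symm.left_comm, neg_add_cancel]
  have e₁₀ : -Q * g * a + a * g = 0 := by
    rw [h1, neg_mul, neg_mul, mul_assoc, neg_add_cancel]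
  have e₁₁ : -Q * g * (-Q * star g) + a * star a = star a * a + star g * g := by
    rw [neg_mul_mul_neg_mul hQ, ← h6, add_comm, mul_star_add_mul_mul_star_mul_eq h5 h6]
  rw [mul_fin_two, e₀₁, e₁₀, e₁₁, smul_one_eq_diagonal, diagonal_fin_two]

theorem qDet_qQuaternion
    (h5 : a * star a - star a * a = (1 - Q * Q) * (g * star g)) (h6 : star g * g = g * star g) :
    qDet Q !![a, -Q * star g; g, star a] = star a * a + star g * g := by
  rw [← mul_star_add_mul_mul_star_mul_eq h5 h6]
  simp [qDet, mul_assoc]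

end QQuaternion

theorem T_SUq2_general {A : Type*} [Ring A] [StarRing A] [Algebra ℂ A] [StarModule ℂ A]
    (q : ℝ) (hq : q ≠ 0)
    (a g : A)
    (h1 : a * g = algebraMap ℂ A q * (g * a))
    (h2 : a * star g = algebraMap ℂ A q * (star g * a))
    (h3 : g * star a = algebraMap ℂ A q * (star a * g))
    (h4 : star g * star a = algebraMap ℂ A q * (star a * star g))
    (h5 : a * star a - star a * a = algebraMap ℂ A (1 - q ^ 2) * (g * star g))
    (h6 : star g * g = g * star g)
    -- the central positive element |x| and its central inverse |x|⁻¹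
    (r rinv : A)
    (hrinvc : ∀ y : A, Commute rinv y)
    (hr2 : r * r = star a * a + star g * g)
    (hrinvs : star rinv = rinv)
    (hrr' : rinv * r = 1) :
    let x : Matrix (Fin 2) (Fin 2) A := !![a, -(algebraMap ℂ A q) * star g; g, star a]
    let T : Matrix (Fin 2) (Fin 2) A := rinv • x
    let epsA : Matrix (Fin 2) (Fin 2) A := !![0, 1; -(algebraMap ℂ A q), 0]
    let epsInvA : Matrix (Fin 2) (Fin 2) A :=
      !![0, -(algebraMap ℂ A (q⁻¹ : ℝ)); 1, 0]
    let Tbar : Matrix (Fin 2) (Fin 2) A := epsInvA * Tᵀ * epsA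
    Tᴴ = Tbar ∧ T * Tbar = 1 ∧ Tbar * T = 1 ∧
    T 0 0 * T 1 1 - algebraMap ℂ A q * (T 0 1 * T 1 0) = 1 := by
  intro x T epsA epsInvA Tbar
  have hQ : ∀ y, Commute (algebraMap ℂ A q) y := Algebra.commutes _
  have hQs : star (algebraMap ℂ A q) = algebraMap ℂ A q := by
    rw [← algebraMap_star_comm, Complex.star_def, Complex.conj_ofReal]
  have hQ'Q : algebraMap ℂ A (q⁻¹ : ℝ) * algebraMap ℂ A q = 1 := by
    rw [← map_mul, ← Complex.ofReal_mul, inv_mul_cancel₀ hq, Complex.ofReal_one, map_one]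
  rw [map_sub, map_one, map_pow, sq] at h5
  have hnorm : rinv * rinv * (star a * a + star g * g) = 1 := by
    rw [← hr2, mul_assoc, ← mul_assoc rinv r r, hrr', one_mul, hrr']
  have hTbar : Tbar = rinv • !![star a, star g; -(algebraMap ℂ A q) * g, a] := by
    simp only [Tbar, T, transpose_smul, mul_smul_of_forall_commute hrinvc, smul_mul,
      x, epsA, epsInvA, eps_inv_mul_transpose_mul_eps hQ hQ'Q, neg_mul, mul_neg, neg_neg,
      ← mul_assoc, hQ'Q, one_mul]
  refine ⟨?_, ?_, ?_, ?_⟩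
  · rw [hTbar, conjTranspose_smul_of_forall_commute hrinvc, hrinvs,
      conjTranspose_qQuaternion hQ hQs]
  · rw [hTbar, smul_mul, mul_smul_of_forall_commute hrinvc, smul_smul,
      qQuaternion_mul_bar hQ h2 h3 h5 h6, smul_smul, hnorm, one_smul]
  · rw [hTbar, smul_mul, mul_smul_of_forall_commute hrinvc, smul_smul,
      bar_mul_qQuaternion hQ h1 h4 h5 h6, smul_smul, hnorm, one_smul]
  · change qDet (algebraMap ℂ A q) (rinv • x) = 1
    rw [qDet_smul_of_forall_commute hrinvc, qDet_qQuaternion h5 h6, hnorm]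

/-- in the localized q-quaternion *-algebra, T := x/|x| satisfies
T† = T⁻¹ = T̄ and det_q(T) = T¹¹T²² − q T¹²T²¹ = 1, i.e. its entries satisfy
the defining relations of SU_q(2). -/
theorem T_SUq2 {A : Type*} [Ring A] [StarRing A] [Algebra ℂ A] [StarModule ℂ A]
    (q : ℝ) (hq : q ≠ 0)
    (a g : A)
    (h1 : a * g = algebraMap ℂ A q * (g * a))
    (h2 : a * star g = algebraMap ℂ A q * (star g * a))
    (h3 : g * star a = algebraMap ℂ A q * (star a * g))
    (h4 : star g * star a = algebraMap ℂ A q * (star a * star g))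
    (h5 : a * star a - star a * a = algebraMap ℂ A (1 - q ^ 2) * (g * star g))
    (h6 : star g * g = g * star g)
    -- the central positive element |x| and its central inverse |x|⁻¹
    (r rinv : A)
    (hrc : ∀ y : A, Commute r y) (hrinvc : ∀ y : A, Commute rinv y)
    (hr2 : r * r = star a * a + star g * g)
    (hrs : star r = r) (hrinvs : star rinv = rinv)
    (hrr : r * rinv = 1) (hrr' : rinv * r = 1) :
    let x : Matrix (Fin 2) (Fin 2) A := !![a, -(algebraMap ℂ A q) * star g; g, star a]
    let T : Matrix (Fin 2) (Fin 2) A := rinv • x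
    let epsA : Matrix (Fin 2) (Fin 2) A := !![0, 1; -(algebraMap ℂ A q), 0]
    let epsInvA : Matrix (Fin 2) (Fin 2) A :=
      !![0, -(algebraMap ℂ A (q⁻¹ : ℝ)); 1, 0]
    let Tbar : Matrix (Fin 2) (Fin 2) A := epsInvA * Tᵀ * epsA
    Tᴴ = Tbar ∧ T * Tbar = 1 ∧ Tbar * T = 1 ∧
    T 0 0 * T 1 1 - algebraMap ℂ A q * (T 0 1 * T 1 0) = 1 :=
  T_SUq2_general q hq a g h1 h2 h3 h4 h5 h6 r rinv hrinvc hr2 hrinvs hrr'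
end

section
/- Let u ∈ M_{4×2}(A) be defined over the localized q-quaternion algebra A by u = (I₂ ; ρx/|x|²)·(1+ρ²/|x|²)^{−1/2}, where ρ > 0 is a central element commuting with everything and x the q-quaternion matrix. Then u†u = I₂, and consequently P := uu† ∈ M₄(A) is a self-adjoint idempotent: P² = P and P† = P. -/
/-!
The q-quaternion relations give `xᴴ x = |x|² · I₂`, so on the lower block of `u` the factor
`|x|⁻²` cancels one `|x|²` and `uᴴ u = s² (1 + ρ² |x|⁻²) = 1`. For any such isometry `u`, the
product `u uᴴ` is a self-adjoint idempotent.
-/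

open Matrix

namespace Matrix

variable {R : Type*}

theorem isStarProjection_mul_conjTranspose [Semiring R] [StarRing R] {m n : Type*} [Fintype m]
    [Fintype n] [DecidableEq n] {u : Matrix m n R} (hu : uᴴ * u = 1) :
    IsStarProjection (u * uᴴ) where
  isIdempotentElem := by
    rw [IsIdempotentElem, Matrix.mul_assoc, ← Matrix.mul_assoc uᴴ, hu, Matrix.one_mul]
  isSelfAdjoint := by
    rw [IsSelfAdjoint, star_eq_conjTranspose, conjTranspose_mul, conjTranspose_conjTranspose]

variable [Ring R] [StarRing R]

theorem qQuaternion_conjTranspose_mul_self {c a g : R} (hc : ∀ y, Commute c y)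
    (hcs : star c = c) (h1 : a * g = c * (g * a)) (h4 : star g * star a = c * (star a * star g))
    (h5 : a * star a - star a * a = (1 - c ^ 2) * (g * star g)) (h6 : star g * g = g * star g) :
    (!![a, -c * star g; g, star a])ᴴ * !![a, -c * star g; g, star a] =
      scalar (Fin 2) (star a * a + star g * g) := by
  ext i j
  fin_cases i <;> fin_cases j <;>
    simp only [Fin.zero_eta, Fin.mk_one, Fin.isValue, mul_apply, Fin.sum_univ_two,
      conjTranspose_apply, of_apply, cons_val', cons_val_zero, cons_val_one, cons_val_fin_one,
      star_neg, star_mul, star_star, hcs, neg_mul, mul_neg, neg_neg, scalar_apply, ne_eq,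
      zero_ne_one, one_ne_zero, not_false_eq_true, diagonal_apply_eq, diagonal_apply_ne]
  · rw [h4, ← mul_assoc, ← (hc _).eq, mul_assoc, neg_add_cancel]
  · rw [h1, ← (hc g).eq, mul_assoc, neg_add_cancel]
  · rw [sub_eq_iff_eq_add'.mp h5, h6, ← (hc g).eq, mul_assoc c g, ← mul_assoc g c, ← (hc g).eq]
    noncomm_ring

variable {n : Type*} [Fintype n] [DecidableEq n]

theorem scalar_conjTranspose (r : R) : (scalar n r)ᴴ = scalar n (star r) := by
  simp only [scalar_apply, diagonal_conjTranspose]; rfl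

theorem conjTranspose_mul_self_fromRows_eq_one {s t N : R} (hs : ∀ y, Commute s y)
    (hss : star s = s) (ht : ∀ y, Commute t y) (hts : star t = t) {M : Matrix n n R}
    (hM : Mᴴ * M = scalar n N) (h : s * s * (1 + t * t * N) = 1) :
    (fromRows (scalar n s) (of fun i j => t * M i j * s))ᴴ *
      fromRows (scalar n s) (of fun i j => t * M i j * s) = 1 := by
  have hlower : of (fun i j => t * M i j * s) = scalar n t * M * scalar n s := by
    ext i j
    simp [scalar_apply, diagonal_mul, mul_diagonal]
  have htt : ∀ y, Commute (t * t) y := fun y => (ht y).mul_left (ht y)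
  calc _ = scalar n s * scalar n s +
        scalar n s * (Mᴴ * scalar n t) * (scalar n t * M * scalar n s) := by
        rw [conjTranspose_fromRows_eq_fromCols_conjTranspose, fromCols_mul_fromRows, hlower,
          conjTranspose_mul, conjTranspose_mul, scalar_conjTranspose, scalar_conjTranspose, hss,
          hts, Matrix.mul_assoc]
    _ = scalar n s * scalar n s + scalar n s * (Mᴴ * scalar n (t * t) * M) * scalar n s := by
        simp only [map_mul, Matrix.mul_assoc]
    _ = scalar n (s * s + s * (t * t * N) * s) := by
        rw [← (scalar_commute _ htt Mᴴ).eq, Matrix.mul_assoc (scalar n (t * t)), hM]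
        simp only [map_mul, map_add]
    _ = scalar n (s * s * (1 + t * t * N)) := by
        rw [mul_assoc s, ← (hs (t * t * N)).eq]
        noncomm_ring
    _ = 1 := by rw [h, map_one]

end Matrix

theorem instanton_projector_general {A : Type*} [Ring A] [StarRing A] [Algebra ℂ A]
    [StarModule ℂ A] (q : ℝ)
    (a g : A)
    (h1 : a * g = algebraMap ℂ A q * (g * a))
    (h4 : star g * star a = algebraMap ℂ A q * (star a * star g))
    (h5 : a * star a - star a * a = algebraMap ℂ A (1 - q ^ 2) * (g * star g))
    (h6 : star g * g = g * star g)
    -- central self-adjoint inverse n2inv of |x|² = α*α + γ*γ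
    (n2inv : A) (hn2c : ∀ y : A, Commute n2inv y) (hn2s : star n2inv = n2inv)
    (hn2 : n2inv * (star a * a + star g * g) = 1)
    -- central self-adjoint ρ (the instanton size)
    (ρ : A) (hρc : ∀ y : A, Commute ρ y) (hρs : star ρ = ρ)
    -- central self-adjoint positive element s = (1+ρ²/|x|²)^{-1/2}
    (s : A) (hsc : ∀ y : A, Commute s y) (hss : star s = s)
    (hs : s * s * (1 + ρ * ρ * n2inv) = 1) :
    let x : Matrix (Fin 2) (Fin 2) A := !![a, -(algebraMap ℂ A q) * star g; g, star a]
    let u : Matrix (Fin 2 ⊕ Fin 2) (Fin 2) A :=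
      Matrix.of (Sum.elim
        (fun i j => (if i = j then s else 0))
        (fun i j => ρ * n2inv * x i j * s))
    let P : Matrix (Fin 2 ⊕ Fin 2) (Fin 2 ⊕ Fin 2) A := u * uᴴ
    uᴴ * u = 1 ∧ P * P = P ∧ Pᴴ = P := by
  intro x u P
  have hq_star : star (algebraMap ℂ A q) = algebraMap ℂ A q := by
    rw [← algebraMap_star_comm, Complex.star_def, Complex.conj_ofReal]
  have hx : xᴴ * x = scalar (Fin 2) (star a * a + star g * g) :=
    qQuaternion_conjTranspose_mul_self (Algebra.commutes _) hq_star h1 h4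
      (by rwa [map_sub, map_one, map_pow] at h5) h6
  have hρn_star : star (ρ * n2inv) = ρ * n2inv := by
    rw [star_mul, hn2s, hρs, (hρc n2inv).eq]
  have hnormalized :
      s * s * (1 + ρ * n2inv * (ρ * n2inv) * (star a * a + star g * g)) = 1 := by
    rwa [mul_assoc (ρ * n2inv) (ρ * n2inv), mul_assoc ρ n2inv (_ + _), hn2, mul_one,
      mul_assoc ρ n2inv ρ, (hn2c ρ).eq, ← mul_assoc]
  have hu : uᴴ * u = 1 := conjTranspose_mul_self_fromRows_eq_one hsc hss
    (fun y => (hρc y).mul_left (hn2c y)) hρn_star hx hnormalized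
  exact ⟨hu, (isStarProjection_mul_conjTranspose hu).isIdempotentElem.eq,
    (isStarProjection_mul_conjTranspose hu).isSelfAdjoint⟩

/-- over the localized q-quaternion *-algebra, the 4×2 matrix
u = (I₂ ; ρx/|x|²)·(1+ρ²/|x|²)^{−1/2} satisfies u†u = I₂, hence P := uu† is a
self-adjoint idempotent: P² = P and P† = P. -/
theorem instanton_projector {A : Type*} [Ring A] [StarRing A] [Algebra ℂ A]
    [StarModule ℂ A] (q : ℝ) (hq : q ≠ 0)
    (a g : A)
    (h1 : a * g = algebraMap ℂ A q * (g * a))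
    (h2 : a * star g = algebraMap ℂ A q * (star g * a))
    (h3 : g * star a = algebraMap ℂ A q * (star a * g))
    (h4 : star g * star a = algebraMap ℂ A q * (star a * star g))
    (h5 : a * star a - star a * a = algebraMap ℂ A (1 - q ^ 2) * (g * star g))
    (h6 : star g * g = g * star g)
    -- central self-adjoint inverse n2inv of |x|² = α*α + γ*γ
    (n2inv : A) (hn2c : ∀ y : A, Commute n2inv y) (hn2s : star n2inv = n2inv)
    (hn2 : n2inv * (star a * a + star g * g) = 1)
    (hn2' : (star a * a + star g * g) * n2inv = 1)
    -- central self-adjoint ρ (the instanton size)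
    (ρ : A) (hρc : ∀ y : A, Commute ρ y) (hρs : star ρ = ρ)
    -- central self-adjoint positive element s = (1+ρ²/|x|²)^{-1/2}
    (s : A) (hsc : ∀ y : A, Commute s y) (hss : star s = s)
    (hs : s * s * (1 + ρ * ρ * n2inv) = 1)
    (hs' : (1 + ρ * ρ * n2inv) * (s * s) = 1) :
    let x : Matrix (Fin 2) (Fin 2) A := !![a, -(algebraMap ℂ A q) * star g; g, star a]
    let u : Matrix (Fin 2 ⊕ Fin 2) (Fin 2) A :=
      Matrix.of (Sum.elim
        (fun i j => (if i = j then s else 0))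
        (fun i j => ρ * n2inv * x i j * s))
    let P : Matrix (Fin 2 ⊕ Fin 2) (Fin 2 ⊕ Fin 2) A := u * uᴴ
    uᴴ * u = 1 ∧ P * P = P ∧ Pᴴ = P :=
  instanton_projector_general q a g h1 h4 h5 h6 n2inv hn2c hn2s hn2 ρ hρc hρs s hsc hss hs
end
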